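/- Let γ₁, γ₂ : [0,1] → ℂ be loops based at p₀ (i.e. γᵢ(0) = γᵢ(1) = p₀), and suppose the range of γ₁ is Lebesgue-null. Let γ₁·γ₂ denote the concatenated loop (γ₁·γ₂)(t) = γ₁(2t) for t ≤ 1/2 and γ₂(2t−1) for t ≥ 1/2. Then σ(γ₁·γ₂) ≤ σ(γ₁) + σ(γ₂), where σ of a loop denotes its minimum homotopy area to the constant path at p₀. -/

import Mathlib

open MeasureTheory unitInterval ENNReal

noncomputable section

/-- `homE H p` is the number of connected components of the fiber `H⁻¹({p})`,
as an extended natural number. -/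
def homE {a b : ℂ} {γ₁ γ₂ : Path a b} (H : Path.Homotopy γ₁ γ₂) (p : ℂ) : ℕ∞ :=
  ENat.card (ConnectedComponents ↥(⇑H ⁻¹' {p}))

/-- The homotopy area `Area(H) = ∫⁻ x, E_H(x)`. -/
def homArea {a b : ℂ} {γ₁ γ₂ : Path a b} (H : Path.Homotopy γ₁ γ₂) : ℝ≥0∞ :=
  ∫⁻ p, (homE H p : ℝ≥0∞)

/-- The minimum homotopy area `σ(γ₁, γ₂)`, the infimum of `Area(H)` over all
homotopies rel endpoints from `γ₁` to `γ₂`. -/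
def minHomArea {a b : ℂ} (γ₁ γ₂ : Path a b) : ℝ≥0∞ :=
  ⨅ H : Path.Homotopy γ₁ γ₂, homArea H

/-!
Gluing nullhomotopies `H₁` of `γ₁` and `H₂` of `γ₂` side by side (`Path.Homotopy.hcomp`) gives a
nullhomotopy of `γ₁.trans γ₂` whose fibre over `x` is covered by continuous images of the fibres of
`H₁` and `H₂`, so its number of fibre components is at most `E_{H₁}(x) + E_{H₂}(x)`. Integrating
this bound needs `E_H` to be measurable. For a continuous map `h` on a compact metric space, the
fibre `h⁻¹{y}` (compact Hausdorff) has at least `n` components iff it maps continuously onto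
`Fin n`, iff it is covered by `n` members of a fixed countable family of open sets which each meet
it and are pairwise disjoint on it; each of these conditions says that `y` lies, or does not lie,
in the image of an open set, and such images are `σ`-compact.
-/

open Set Function TopologicalSpace

theorem enatCard_le_enatCard_connectedComponents {α β : Type*} [TopologicalSpace α]
    [TopologicalSpace β] [TotallyDisconnectedSpace β] {f : α → β} (hf : Continuous f)
    (hs : Surjective f) : ENat.card β ≤ ENat.card (ConnectedComponents α) := by
  refine ENat.card_le_card_of_injective (injective_surjInv (f := hf.connectedComponentsLift) ?_)
  intro b
  obtain ⟨a, rfl⟩ := hs b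
  exact ⟨a, hf.connectedComponentsLift_apply_coe a⟩

theorem enatCard_connectedComponents_le_add {X Y Z : Type*} [TopologicalSpace X]
    [TopologicalSpace Y] [TopologicalSpace Z] {f : X → Z} {g : Y → Z} (hf : Continuous f)
    (hg : Continuous g) (hfg : range f ∪ range g = univ) :
    ENat.card (ConnectedComponents Z) ≤
      ENat.card (ConnectedComponents X) + ENat.card (ConnectedComponents Y) := by
  rw [← ENat.card_sum]
  refine ENat.card_le_card_of_injective (injective_surjInv
    (f := Sum.elim hf.connectedComponentsMap hg.connectedComponentsMap) ?_)
  refine ConnectedComponents.surjective_coe.forall.2 fun z => ?_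
  rcases hfg.symm.subset (mem_univ z) with ⟨x, rfl⟩ | ⟨y, rfl⟩
  exacts [⟨.inl x, rfl⟩, ⟨.inr y, rfl⟩]

theorem enatCard_connectedComponents_preimage_le_add {X Y Z V : Type*} [TopologicalSpace X]
    [TopologicalSpace Y] [TopologicalSpace Z] {G : Z → V} {f : X → Z} {g : Y → Z}
    (hf : Continuous f) (hg : Continuous g) (hfg : range f ∪ range g = univ) (v : V) :
    ENat.card (ConnectedComponents (G ⁻¹' {v})) ≤
      ENat.card (ConnectedComponents ((G ∘ f) ⁻¹' {v})) +
        ENat.card (ConnectedComponents ((G ∘ g) ⁻¹' {v})) := by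
  refine enatCard_connectedComponents_le_add
    (hf.restrict (show MapsTo f ((G ∘ f) ⁻¹' {v}) (G ⁻¹' {v}) from fun _ hx => hx))
    (hg.restrict (show MapsTo g ((G ∘ g) ⁻¹' {v}) (G ⁻¹' {v}) from fun _ hx => hx))
    (eq_univ_of_forall fun ⟨z, hz⟩ => ?_)
  rcases hfg.symm.subset (mem_univ z) with ⟨x, rfl⟩ | ⟨y, rfl⟩
  exacts [.inl ⟨⟨x, hz⟩, rfl⟩, .inr ⟨⟨y, hz⟩, rfl⟩]

theorem DiscreteQuotient.exists_injective_proj_comp {X ι : Type*} [TopologicalSpace X]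
    [T2Space X] [CompactSpace X] [TotallyDisconnectedSpace X] [Finite ι] {c : ι → X}
    (hc : Injective c) : ∃ Q : DiscreteQuotient X, Injective (Q.proj ∘ c) := by
  have hsep : ∀ i j, ∃ Q : DiscreteQuotient X, i ≠ j → Q.proj (c i) ≠ Q.proj (c j) := by
    intro i j
    by_contra! h
    obtain ⟨hne, -⟩ := h ⊤
    exact hne (hc (DiscreteQuotient.eq_of_forall_proj_eq fun Q => (h Q).2))
  choose Q hQ using hsep
  have := Fintype.ofFinite ι
  refine ⟨Finset.univ.inf fun p : ι × ι => Q p.1 p.2, fun i j hij => ?_⟩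
  by_contra hne
  have hle := Finset.inf_le (f := fun p : ι × ι => Q p.1 p.2) (Finset.mem_univ (i, j))
  refine hQ i j hne ?_
  rw [← DiscreteQuotient.ofLE_proj hle, ← DiscreteQuotient.ofLE_proj hle]
  exact congrArg _ hij

theorem exists_continuous_surjective_fin_of_le_enatCard {α : Type*} [TopologicalSpace α]
    [T2Space α] [CompactSpace α] {n : ℕ} (hn : 0 < n)
    (h : (n : ℕ∞) ≤ ENat.card (ConnectedComponents α)) :
    ∃ f : α → Fin n, Continuous f ∧ Surjective f := by
  obtain ⟨c, -⟩ := Fin.Embedding.exists_embedding_disjoint_range_of_add_le_ENat_card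
    (s := (∅ : Set (ConnectedComponents α))) (by simpa using h)
  -- `ConnectedComponents α` is compact, Hausdorff and totally disconnected.
  obtain ⟨Q, hQ⟩ := DiscreteQuotient.exists_injective_proj_comp c.injective
  have : Nonempty (Fin n) := ⟨⟨0, hn⟩⟩
  refine ⟨invFun (Q.proj ∘ c) ∘ Q.proj ∘ (↑), continuous_of_discreteTopology.comp
    (Q.proj_continuous.comp ConnectedComponents.continuous_coe), fun i => ?_⟩
  obtain ⟨a, ha⟩ := ConnectedComponents.surjective_coe (c i)
  exact ⟨a, by simp only [comp_apply, ha]; exact leftInverse_invFun hQ i⟩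

theorem natCast_le_enatCard_connectedComponents_iff {α : Type*} [TopologicalSpace α]
    [T2Space α] [CompactSpace α] {n : ℕ} (hn : 0 < n) :
    (n : ℕ∞) ≤ ENat.card (ConnectedComponents α) ↔
      ∃ f : α → Fin n, Continuous f ∧ Surjective f :=
  ⟨exists_continuous_surjective_fin_of_le_enatCard hn, fun ⟨_, hf, hs⟩ => by
    simpa using enatCard_le_enatCard_connectedComponents hf hs⟩

theorem exists_countable_isOpen_between_isCompact_isOpen (X : Type*) [TopologicalSpace X]
    [SecondCountableTopology X] :
    ∃ 𝓦 : Set (Set X), 𝓦.Countable ∧ (∀ W ∈ 𝓦, IsOpen W) ∧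
      ∀ ⦃C U : Set X⦄, IsCompact C → IsOpen U → C ⊆ U → ∃ W ∈ 𝓦, C ⊆ W ∧ W ⊆ U := by
  refine ⟨sUnion '' {t | t.Finite ∧ t ⊆ countableBasis X},
    (countable_ofPred_finite_subset (countable_countableBasis X)).image _, ?_, ?_⟩
  · rintro _ ⟨t, ⟨-, htB⟩, rfl⟩
    exact isOpen_sUnion fun b hb => isOpen_of_mem_countableBasis (htB hb)
  · intro C U hC hU hCU
    rw [(isBasis_countableBasis X).open_eq_sUnion' hU, sUnion_eq_biUnion] at hCU
    obtain ⟨t, htB, htfin, hCt⟩ :=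
      hC.elim_finite_subcover_image (fun b hb => isOpen_of_mem_countableBasis hb.1) hCU
    exact ⟨⋃₀ t, ⟨t, ⟨htfin, fun b hb => (htB hb).1⟩, rfl⟩, by rwa [sUnion_eq_biUnion],
      sUnion_subset fun b hb => (htB hb).2⟩

section FiniteOpenCover

variable {X : Type*} [TopologicalSpace X] {K : Set X} {n : ℕ}

theorem exists_continuous_surjective_of_open_cover {W : Fin n → Set X}
    (hW : ∀ i, IsOpen (W i)) (hmeet : ∀ i, (K ∩ W i).Nonempty)
    (hdisj : ∀ i j, i ≠ j → ¬(K ∩ (W i ∩ W j)).Nonempty) (hcov : ¬(K ∩ (⋃ i, W i)ᶜ).Nonempty) :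
    ∃ f : K → Fin n, Continuous f ∧ Surjective f := by
  have hmem : ∀ k : K, ∃ i, (k : X) ∈ W i := fun k => by
    by_contra! h
    exact hcov ⟨k, k.2, by simpa using h⟩
  choose f hf using hmem
  have hfib : ∀ k : K, ∀ i, (k : X) ∈ W i → f k = i := fun k i hk =>
    by_contra fun hne => hdisj _ _ hne ⟨k, k.2, hf k, hk⟩
  refine ⟨f, continuous_discrete_rng.2 fun i => ?_, fun i => ?_⟩
  · have : f ⁻¹' {i} = Subtype.val ⁻¹' W i :=
      Set.ext fun k => ⟨fun hk => (mem_singleton_iff.1 hk) ▸ hf k, hfib k i⟩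
    rw [this]
    exact (hW i).preimage continuous_subtype_val
  · obtain ⟨x, hxK, hxW⟩ := hmeet i
    exact ⟨⟨x, hxK⟩, hfib _ i hxW⟩

theorem exists_open_cover_of_continuous_surjective {𝓦 : Set (Set X)}
    (h𝓦 : ∀ ⦃C U : Set X⦄, IsCompact C → IsOpen U → C ⊆ U → ∃ W ∈ 𝓦, C ⊆ W ∧ W ⊆ U)
    (hK : IsCompact K) {f : K → Fin n} (hf : Continuous f) (hs : Surjective f) :
    ∃ W : Fin n → 𝓦, (∀ i, (K ∩ W i).Nonempty) ∧
      (∀ i j, i ≠ j → ¬(K ∩ (W i ∩ W j)).Nonempty) ∧ ¬(K ∩ (⋃ i, (W i : Set X))ᶜ).Nonempty := by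
  choose U hUo hU using fun i => isOpen_induced_iff.1 ((isOpen_discrete {i}).preimage hf)
  have : CompactSpace K := isCompact_iff_compactSpace.1 hK
  have hC : ∀ i, IsCompact (Subtype.val '' (f ⁻¹' {i})) := fun i =>
    ((isClosed_discrete {i}).preimage hf).isCompact.image continuous_subtype_val
  have hCU : ∀ i, Subtype.val '' (f ⁻¹' {i}) ⊆ U i := fun i => by
    rw [← hU i]
    exact image_preimage_subset _ _
  choose W hW𝓦 hCW hWU using fun i => h𝓦 (hC i) (hUo i) (hCU i)
  have hfW : ∀ (x : X) (hx : x ∈ K) i, x ∈ W i → f ⟨x, hx⟩ = i := fun x hx i hxW => by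
    change (⟨x, hx⟩ : K) ∈ f ⁻¹' {i}
    rw [← hU i]
    exact hWU i hxW
  refine ⟨fun i => ⟨W i, hW𝓦 i⟩, fun i => ?_, fun i j hij => ?_, ?_⟩
  · obtain ⟨k, rfl⟩ := hs i
    exact ⟨k, k.2, hCW _ ⟨k, rfl, rfl⟩⟩
  · rintro ⟨x, hxK, hxi, hxj⟩
    exact hij ((hfW x hxK i hxi).symm.trans (hfW x hxK j hxj))
  · rintro ⟨x, hxK, hx⟩
    exact hx (mem_iUnion.2 ⟨f ⟨x, hxK⟩, hCW _ ⟨⟨x, hxK⟩, rfl, rfl⟩⟩)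

end FiniteOpenCover

theorem ENat.measurable_of_measurableSet_le {α : Type*} [MeasurableSpace α] {f : α → ℕ∞}
    (hf : ∀ n : ℕ, MeasurableSet {a | (n : ℕ∞) ≤ f a}) : Measurable f := by
  refine ENat.measurable_iff.2 fun n => ?_
  have : f ⁻¹' {(n : ℕ∞)} = {a | (n : ℕ∞) ≤ f a} \ {a | ((n + 1 : ℕ) : ℕ∞) ≤ f a} := by
    refine Set.ext fun a => ?_
    simp only [mem_preimage, mem_singleton_iff, Set.mem_sdiff, Set.mem_ofPred_eq, Nat.cast_add,
      Nat.cast_one, ENat.add_one_le_iff (ENat.natCast_ne_top n), not_lt]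
    exact ⟨fun h => ⟨h.ge, h.le⟩, fun h => le_antisymm h.2 h.1⟩
  rw [this]
  exact (hf n).diff (hf (n + 1))

theorem IsOpen.measurableSet_image {X Y : Type*} [PseudoMetricSpace X] [CompactSpace X]
    [TopologicalSpace Y] [T2Space Y] [MeasurableSpace Y] [OpensMeasurableSpace Y] {h : X → Y}
    (hh : Continuous h) {U : Set X} (hU : IsOpen U) : MeasurableSet (h '' U) := by
  obtain ⟨F, hF, -, rfl, -⟩ := hU.exists_iUnion_isClosed
  rw [image_iUnion]
  exact .iUnion fun k => ((hF k).isCompact.image hh).measurableSet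

theorem measurable_enatCard_connectedComponents_preimage {X Y : Type*} [MetricSpace X]
    [CompactSpace X] [TopologicalSpace Y] [T2Space Y] [MeasurableSpace Y]
    [OpensMeasurableSpace Y] {h : X → Y} (hh : Continuous h) :
    Measurable fun y => ENat.card (ConnectedComponents (h ⁻¹' {y})) := by
  obtain ⟨𝓦, h𝓦c, h𝓦o, h𝓦⟩ := exists_countable_isOpen_between_isCompact_isOpen X
  have := h𝓦c.to_subtype
  refine ENat.measurable_of_measurableSet_le fun n => ?_
  rcases Nat.eq_zero_or_pos n with rfl | hn
  · simp
  have hfiber : {y | (n : ℕ∞) ≤ ENat.card (ConnectedComponents (h ⁻¹' {y}))} =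
      ⋃ W : Fin n → 𝓦, (⋂ i, h '' W i) ∩ (⋂ (i) (j) (_ : i ≠ j), (h '' (W i ∩ W j))ᶜ) ∩
        (h '' (⋃ i, (W i : Set X))ᶜ)ᶜ := by
    refine Set.ext fun y => ?_
    have hK : IsCompact (h ⁻¹' {y}) := (isClosed_singleton.preimage hh).isCompact
    have := isCompact_iff_compactSpace.1 hK
    have hmeet : ∀ A : Set X, (h ⁻¹' {y} ∩ A).Nonempty ↔ y ∈ h '' A := fun A =>
      ⟨fun ⟨x, hx, hA⟩ => ⟨x, hA, hx⟩, fun ⟨x, hA, hx⟩ => ⟨x, hx, hA⟩⟩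
    rw [Set.mem_ofPred_eq, natCast_le_enatCard_connectedComponents_iff hn]
    simp only [mem_iUnion, mem_inter_iff, mem_iInter, mem_compl_iff, ← hmeet, and_assoc]
    exact ⟨fun ⟨f, hf, hs⟩ => exists_open_cover_of_continuous_surjective h𝓦 hK hf hs,
      fun ⟨W, hmeet, hdisj, hcov⟩ =>
        exists_continuous_surjective_of_open_cover (fun i => h𝓦o _ (W i).2) hmeet hdisj hcov⟩
  rw [hfiber]
  refine .iUnion fun W => ((MeasurableSet.iInter fun i => ?_).inter
    (.iInter fun i => .iInter fun j => .iInter fun _ => ?_)).inter ?_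
  · exact (h𝓦o _ (W i).2).measurableSet_image hh
  · exact ((h𝓦o _ (W i).2).inter (h𝓦o _ (W j).2)).measurableSet_image hh |>.compl
  · exact ((isOpen_iUnion fun i => h𝓦o _ (W i).2).isClosed_compl.isCompact.image
      hh).measurableSet.compl

namespace unitInterval

def firstHalf (t : I) : I := ⟨t / 2, div_mem t.2.1 zero_le_two (t.2.2.trans one_le_two)⟩

def secondHalf (t : I) : I :=
  ⟨(t + 1) / 2, div_mem (by linarith [t.2.1]) zero_le_two (by linarith [t.2.2])⟩

theorem continuous_firstHalf : Continuous firstHalf := by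
  unfold firstHalf; fun_prop

theorem continuous_secondHalf : Continuous secondHalf := by
  unfold secondHalf; fun_prop

theorem range_firstHalf_union_range_secondHalf :
    Set.range firstHalf ∪ Set.range secondHalf = Set.univ := by
  refine Set.eq_univ_of_forall fun t => ?_
  by_cases ht : (t : ℝ) ≤ 1 / 2
  · exact .inl ⟨⟨2 * t, by linarith [t.2.1], by linarith⟩, Subtype.ext (by simp [firstHalf])⟩
  · exact .inr ⟨⟨2 * t - 1, by linarith, by linarith [t.2.2]⟩,
      Subtype.ext (by simp [secondHalf])⟩

end unitInterval

namespace Path.Homotopy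

variable {X : Type*} [TopologicalSpace X] {x₀ x₁ x₂ : X} {p₀ q₀ : Path x₀ x₁}
  {p₁ q₁ : Path x₁ x₂}

theorem hcomp_apply_firstHalf (F : Homotopy p₀ q₀) (G : Homotopy p₁ q₁) (s t : I) :
    F.hcomp G (s, firstHalf t) = F (s, t) := by
  have ht : ((firstHalf t : I) : ℝ) ≤ 1 / 2 := by
    change (t : ℝ) / 2 ≤ 1 / 2
    linarith [t.2.2]
  rw [hcomp_apply, dif_pos ht]
  refine congrArg (fun u => F (s, u)) (Subtype.ext ?_)
  change 2 * ((t : ℝ) / 2) = t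
  ring

theorem hcomp_apply_secondHalf (F : Homotopy p₀ q₀) (G : Homotopy p₁ q₁) (s t : I) :
    F.hcomp G (s, secondHalf t) = G (s, t) := by
  rcases eq_or_ne t 0 with rfl | ht
  -- `secondHalf 0 = 1 / 2` lies in the `F` branch of `hcomp`, where both sides equal `x₁`.
  · have h : ((secondHalf 0 : I) : ℝ) ≤ 1 / 2 := by norm_num [secondHalf]
    rw [hcomp_apply, dif_pos h, G.source]
    refine (congrArg (fun u => F (s, u)) (Subtype.ext ?_)).trans (F.target s)
    norm_num [secondHalf]
  · have ht' : ¬((secondHalf t : I) : ℝ) ≤ 1 / 2 := by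
      simp only [secondHalf, not_le]
      linarith [coe_pos.2 (unitInterval.pos_iff_ne_zero.2 ht)]
    rw [hcomp_apply, dif_neg ht']
    refine congrArg (fun u => G (s, u)) (Subtype.ext ?_)
    change 2 * (((t : ℝ) + 1) / 2) - 1 = t
    ring

end Path.Homotopy

section HomotopyArea

variable {a b c : ℂ}

theorem measurable_homE {γ₁ γ₂ : Path a b} (H : Path.Homotopy γ₁ γ₂) :
    Measurable fun p => (homE H p : ℝ≥0∞) :=
  measurable_from_top.comp (measurable_enatCard_connectedComponents_preimage (map_continuous H))

theorem homE_hcomp_le {p₀ q₀ : Path a b} {p₁ q₁ : Path b c} (F : Path.Homotopy p₀ q₀)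
    (G : Path.Homotopy p₁ q₁) (p : ℂ) : homE (F.hcomp G) p ≤ homE F p + homE G p := by
  have hF : ⇑(F.hcomp G) ∘ Prod.map id firstHalf = F :=
    funext fun st => F.hcomp_apply_firstHalf G st.1 st.2
  have hG : ⇑(F.hcomp G) ∘ Prod.map id secondHalf = G :=
    funext fun st => F.hcomp_apply_secondHalf G st.1 st.2
  have hcover :
      range (Prod.map id firstHalf) ∪ range (Prod.map (id : I → I) secondHalf) = univ := by
    rw [range_prodMap, range_prodMap, ← prod_union, range_firstHalf_union_range_secondHalf,
      range_id, univ_prod_univ]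
  have := enatCard_connectedComponents_preimage_le_add (continuous_id.prodMap continuous_firstHalf)
    (continuous_id.prodMap continuous_secondHalf) hcover (G := F.hcomp G) p
  rwa [hF, hG] at this

theorem homArea_hcomp_le {p₀ q₀ : Path a b} {p₁ q₁ : Path b c} (F : Path.Homotopy p₀ q₀)
    (G : Path.Homotopy p₁ q₁) : homArea (F.hcomp G) ≤ homArea F + homArea G :=
  calc homArea (F.hcomp G) ≤ ∫⁻ p, ((homE F p : ℝ≥0∞) + homE G p) :=
        lintegral_mono fun p => (ENat.toENNReal_le.2 (homE_hcomp_le F G p)).trans_eq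
          (ENat.toENNReal_add _ _)
    _ = homArea F + homArea G := lintegral_add_left (measurable_homE F) _

theorem minHomArea_trans_le (p₀ q₀ : Path a b) (p₁ q₁ : Path b c) :
    minHomArea (p₀.trans p₁) (q₀.trans q₁) ≤ minHomArea p₀ q₀ + minHomArea p₁ q₁ :=
  ENNReal.le_iInf_add_iInf fun F G => (iInf_le _ (F.hcomp G)).trans (homArea_hcomp_le F G)

end HomotopyArea

theorem stmt_16_general (p₀ : ℂ) (γ₁ γ₂ : Path p₀ p₀) :
    minHomArea (γ₁.trans γ₂) (Path.refl p₀) ≤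
      minHomArea γ₁ (Path.refl p₀) + minHomArea γ₂ (Path.refl p₀) := by
  simpa only [Path.refl_trans_refl] using minHomArea_trans_le γ₁ (.refl p₀) γ₂ (.refl p₀)

/-- Subadditivity of the minimum nullhomotopy area under concatenation of loops, when the
first loop has Lebesgue-null range. -/
theorem stmt_16 (p₀ : ℂ) (γ₁ γ₂ : Path p₀ p₀) (hnull : volume (Set.range γ₁) = 0) :
    minHomArea (γ₁.trans γ₂) (Path.refl p₀) ≤
      minHomArea γ₁ (Path.refl p₀) + minHomArea γ₂ (Path.refl p₀) :=
  stmt_16_general p₀ γ₁ γ₂
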